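/- For every positive integer ℓ, as formal power series in q: ((-q;q)_∞ / (q;q)_∞) · Σ_{n=-ℓ+1}^{ℓ} (-1)^n q^{n^2} = 1 + (-1)^{ℓ-1} q^{ℓ^2} ((-q;q)_ℓ / (q;q)_{ℓ-1}) · Σ_{n=0}^{∞} ((-q^{n+ℓ+1}; q)_∞ / (q^{n+ℓ+1}; q)_∞) · q^{ℓn}. -/

import Mathlib

noncomputable section
open PowerSeries

/-- Coefficientwise-stable infinite product of power series. -/
def iProd (f : ℕ → PowerSeries ℚ) : PowerSeries ℚ :=
  PowerSeries.mk fun n => PowerSeries.coeff (R := ℚ) n (∏ i ∈ Finset.range (n + 1), f i)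

/-- Coefficientwise-stable infinite sum of power series. -/
def iSum (f : ℕ → PowerSeries ℚ) : PowerSeries ℚ :=
  PowerSeries.mk fun n => PowerSeries.coeff (R := ℚ) n (∑ i ∈ Finset.range (n + 1), f i)

/-- `(q;q)_n`. -/
def pq (n : ℕ) : PowerSeries ℚ := ∏ i ∈ Finset.range n, (1 - X ^ (i + 1))

/-- `(-q;q)_n`. -/
def pmq (n : ℕ) : PowerSeries ℚ := ∏ i ∈ Finset.range n, (1 + X ^ (i + 1))

/-- `(q;q)_∞`. -/
def pqInf : PowerSeries ℚ := iProd fun i => 1 - X ^ (i + 1)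

/-- `(-q;q)_∞`. -/
def pmqInf : PowerSeries ℚ := iProd fun i => 1 + X ^ (i + 1)

/-- `(-1)^j` for an integer `j`, as a power series. -/
def zsgn (j : ℤ) : PowerSeries ℚ := if Even j then 1 else -1

open Finset

abbrev R := PowerSeries ℚ

-- ring test with symbolic exponents
example (x : R) (n l : ℕ) : x^(l*(n+1)) = x^(l*n) * x^l := by ring

theorem coeff_eq_zero_of_dvd {φ : R} {m K : ℕ} (h : (X:R)^m ∣ φ) (hK : K < m) :
    coeff (R := ℚ) K φ = 0 := by
  rw [PowerSeries.X_pow_dvd_iff] at h; exact h K hK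

def good (f : ℕ → R) : Prop := ∀ i, (X:R)^(i+1) ∣ (f i - 1)

theorem prod_stable {f : ℕ → R} (hf : good f) (K : ℕ) :
    ∀ M, K + 1 ≤ M → coeff (R := ℚ) K (∏ i ∈ range M, f i) = coeff (R := ℚ) K (∏ i ∈ range (K+1), f i) := by
  intro M hM
  induction M, hM using Nat.le_induction with
  | base => rfl
  | succ M hM ih =>
    rw [prod_range_succ]
    have : (∏ i ∈ range M, f i) * f M
        = (∏ i ∈ range M, f i) + (∏ i ∈ range M, f i) * (f M - 1) := by ring
    rw [this, map_add, ih, coeff_eq_zero_of_dvd (Dvd.dvd.mul_left (hf M) _) (by omega), add_zero]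

theorem iProd_coeff {f : ℕ → R} (hf : good f) {K M : ℕ} (h : K < M) :
    coeff (R := ℚ) K (iProd f) = coeff (R := ℚ) K (∏ i ∈ range M, f i) := by
  have h1 : coeff (R := ℚ) K (iProd f) = coeff (R := ℚ) K (∏ i ∈ range (K+1), f i) := by
    simp [iProd, coeff_mk]
  rw [h1, prod_stable hf K M h]

theorem iSum_coeff (f : ℕ → R) {K M : ℕ} (h : K < M) (hf : ∀ n, (X:R)^n ∣ f n) :
    coeff (R := ℚ) K (iSum f) = coeff (R := ℚ) K (∑ i ∈ range M, f i) := by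
  have step : ∀ N, K + 1 ≤ N → coeff (R := ℚ) K (∑ i ∈ range N, f i) = coeff (R := ℚ) K (∑ i ∈ range (K+1), f i) := by
    intro N hN
    induction N, hN using Nat.le_induction with
    | base => rfl
    | succ N hN ih =>
      rw [sum_range_succ, map_add, ih, coeff_eq_zero_of_dvd (hf N) (by omega), add_zero]
  have h1 : coeff (R := ℚ) K (iSum f) = coeff (R := ℚ) K (∑ i ∈ range (K+1), f i) := by
    simp [iSum, coeff_mk]
  rw [h1, ← step M h]

theorem coeff_mul_agree {A B : R} (P : R) {K : ℕ}
    (h : ∀ j, j ≤ K → coeff (R := ℚ) j A = coeff (R := ℚ) j B) :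
    coeff (R := ℚ) K (P * A) = coeff (R := ℚ) K (P * B) := by
  rw [coeff_mul, coeff_mul]
  refine Finset.sum_congr rfl fun p hp => ?_
  rw [Finset.HasAntidiagonal.mem_antidiagonal] at hp
  rw [h p.2 (by omega)]

theorem iProd_congr {f g : ℕ → R} (h : ∀ i, f i = g i) : iProd f = iProd g := by
  rw [funext h]

theorem iProd_split {f : ℕ → R} (hf : good f) (k : ℕ) :
    iProd f = (∏ i ∈ range k, f i) * iProd (fun i => f (k + i)) := by
  have hg : good (fun i => f (k + i)) := fun i =>
    dvd_trans (pow_dvd_pow (X:R) (by omega)) (hf (k+i))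
  ext K
  rw [coeff_mul_agree (∏ i ∈ range k, f i)
      (fun j hj => iProd_coeff hg (show j < K+1 by omega))]
  rw [← Finset.prod_range_add, iProd_coeff hf (show K < k + (K+1) by omega)]

theorem iSum_add (f g : ℕ → R) : iSum f + iSum g = iSum (fun n => f n + g n) := by
  ext K
  simp [iSum, coeff_mk, Finset.sum_add_distrib]

theorem mul_iSum (c : R) {f : ℕ → R} (hf : ∀ n, (X:R)^n ∣ f n) :
    c * iSum f = iSum (fun n => c * f n) := by
  ext K
  rw [coeff_mul_agree c (fun j hj => (iSum_coeff f (show j < K+1 by omega) hf))]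
  have hd : ∀ n, (X:R)^n ∣ c * f n := fun n => Dvd.dvd.mul_left (hf n) c
  rw [iSum_coeff _ (show K < K+1 by omega) hd, Finset.mul_sum]

theorem iSum_congr {f g : ℕ → R} (h : ∀ i, f i = g i) : iSum f = iSum g := by
  rw [funext h]

theorem iSum_tele {f t : ℕ → R} (L : R) (hstep : ∀ n, f n = t n - t (n+1))
    (hlim : ∀ K, coeff (R := ℚ) K (t (K+1)) = coeff (R := ℚ) K L) :
    iSum f = t 0 - L := by
  ext K
  have h1 : coeff (R := ℚ) K (iSum f) = coeff (R := ℚ) K (∑ i ∈ range (K+1), f i) := by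
    simp [iSum, coeff_mk]
  have h2 : (∑ i ∈ range (K+1), f i) = t 0 - t (K+1) := by
    have := Finset.sum_range_sub' t (K+1)
    calc (∑ i ∈ range (K+1), f i) = ∑ i ∈ range (K+1), (t i - t (i+1)) :=
          Finset.sum_congr rfl fun i _ => hstep i
      _ = t 0 - t (K+1) := by rw [Finset.sum_range_sub' t (K+1)]
  rw [h1, h2, map_sub, map_sub, hlim]

/-- tail product `(-q^m;q)_∞`. -/
def Pm (m : ℕ) : R := iProd fun i => 1 + X ^ (m + i)
/-- tail product `(q^m;q)_∞`. -/
def Pt (m : ℕ) : R := iProd fun i => 1 - X ^ (m + i)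
def Q (ℓ n : ℕ) : R := ∏ i ∈ range n, (1 - X ^ (ℓ + 1 + i))
def a (ℓ n : ℕ) : R := X ^ (ℓ * n) * ((1 - X ^ ℓ) * Q ℓ n) * Pm (n + ℓ + 1)
def T (ℓ n : ℕ) : R := X ^ (ℓ * n) * (Q ℓ n * (1 - X ^ (ℓ + ℓ + n + 1))) * Pm (n + ℓ + 1)
def F (ℓ : ℕ) : R := iSum (a ℓ)

theorem good_Pm {m : ℕ} (hm : 1 ≤ m) : good (fun i => (1:R) + X ^ (m + i)) := by
  intro i
  have : (1:R) + X ^ (m+i) - 1 = X ^ (m+i) := by ring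
  rw [this]
  exact pow_dvd_pow _ (by omega)

theorem good_Pt {m : ℕ} (hm : 1 ≤ m) : good (fun i => (1:R) - X ^ (m + i)) := by
  intro i
  have : (1:R) - X ^ (m+i) - 1 = -X ^ (m+i) := by ring
  rw [this]
  exact Dvd.dvd.neg_right (pow_dvd_pow _ (by omega))

theorem Pm_succ (m : ℕ) (hm : 1 ≤ m) : Pm m = (1 + X ^ m) * Pm (m + 1) := by
  have h := iProd_split (good_Pm hm) 1
  rw [Pm, h, prod_range_one]
  have h1 : (1:R) + X ^ (m + 0) = 1 + X ^ m := by norm_num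
  have h2 : (iProd fun i => (1:R) + X ^ (m + (1 + i))) = Pm (m + 1) :=
    iProd_congr fun i => by rw [show m + (1 + i) = m + 1 + i by omega]
  rw [h1, h2]

theorem Q_succ (ℓ n : ℕ) : Q ℓ (n+1) = Q ℓ n * (1 - X ^ (ℓ + 1 + n)) := by
  rw [Q, prod_range_succ]; rfl

theorem Q_succ' (ℓ n : ℕ) : Q ℓ (n+1) = (1 - X ^ (ℓ + 1)) * Q (ℓ+1) n := by
  rw [Q, prod_range_succ', mul_comm]
  have h1 : (1:R) - X ^ (ℓ + 1 + 0) = 1 - X ^ (ℓ + 1) := by norm_num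
  have h2 : (∏ i ∈ range n, ((1:R) - X ^ (ℓ + 1 + (i + 1)))) = Q (ℓ+1) n :=
    Finset.prod_congr rfl fun i _ => by rw [show ℓ + 1 + (i+1) = ℓ + 1 + 1 + i by omega]
  rw [h1, h2]

theorem prod_sub_one_dvd {m M : ℕ} {f : ℕ → R} (hf : ∀ i, (X:R)^m ∣ (f i - 1)) :
    (X:R)^m ∣ (∏ i ∈ range M, f i) - 1 := by
  induction M with
  | zero => simp
  | succ M ih =>
    rw [prod_range_succ]
    have : (∏ i ∈ range M, f i) * f M - 1
        = (∏ i ∈ range M, f i) * (f M - 1) + ((∏ i ∈ range M, f i) - 1) := by ring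
    rw [this]
    exact dvd_add (Dvd.dvd.mul_left (hf M) _) ih

theorem Pm_sub_one_dvd (m : ℕ) (hm : 1 ≤ m) : (X:R)^m ∣ (Pm m - 1) := by
  rw [PowerSeries.X_pow_dvd_iff]
  intro j hj
  rw [map_sub, Pm, iProd_coeff (good_Pm hm) (show j < j+1 by omega)]
  have h : (X:R)^m ∣ (∏ i ∈ range (j+1), (1 + X^(m+i))) - 1 :=
    prod_sub_one_dvd (fun i => by
      have : (1:R) + X^(m+i) - 1 = X^(m+i) := by ring
      rw [this]; exact pow_dvd_pow _ (by omega))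
  have h2 := coeff_eq_zero_of_dvd h hj
  rw [map_sub] at h2
  linarith

theorem FE_step (ℓ n : ℕ) (hℓ : 1 ≤ ℓ) :
    a ℓ n + (X^(ℓ+ℓ+1) * (1+X^(ℓ+1))) * a (ℓ+1) n = T ℓ n - T ℓ (n+1) := by
  rw [a, a, T, T]
  rw [show n+1+ℓ+1 = n+ℓ+1+1 by omega, show n+(ℓ+1)+1 = n+ℓ+1+1 by omega]
  rw [Pm_succ (n+ℓ+1) (by omega)]
  rw [← Q_succ', Q_succ]
  rw [show ℓ+ℓ+(n+1)+1 = ℓ+ℓ+n+2 by omega]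
  ring

theorem a_dvd (ℓ : ℕ) (hℓ : 1 ≤ ℓ) : ∀ n, (X:R)^n ∣ a ℓ n := by
  intro n
  rw [a]
  exact dvd_mul_of_dvd_left (dvd_mul_of_dvd_left (pow_dvd_pow _ (by nlinarith)) _) _

theorem FE (ℓ : ℕ) (hℓ : 1 ≤ ℓ) :
    F ℓ + (X^(ℓ+ℓ+1) * (1+X^(ℓ+1))) * F (ℓ+1) = Pm (ℓ+1) * (1 - X^(ℓ+ℓ+1)) := by
  rw [F, F, mul_iSum _ (a_dvd (ℓ+1) (by omega)), iSum_add]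
  have tele : iSum (fun n => a ℓ n + X^(ℓ+ℓ+1)*(1+X^(ℓ+1)) * a (ℓ+1) n) = T ℓ 0 - 0 := by
    refine iSum_tele 0 (fun n => FE_step ℓ n hℓ) (fun K => ?_)
    rw [map_zero]
    refine coeff_eq_zero_of_dvd (φ := T ℓ (K+1)) ?_ (show K < ℓ*(K+1) by nlinarith)
    rw [T]
    exact dvd_mul_of_dvd_left (dvd_mul_of_dvd_left dvd_rfl _) _
  rw [tele, sub_zero, T]
  rw [show ℓ+ℓ+0+1 = ℓ+ℓ+1 by omega, show 0+ℓ+1 = ℓ+1 by omega]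
  simp only [Q, prod_range_zero, mul_zero, pow_zero]
  ring


def vG (n : ℕ) : R := (1 + X^(n+1)) * Q 0 (n+1) * Pm (n+2)

theorem good_pq : good (fun i => (1:R) - X ^ (i + 1)) := fun i => by
  have : (1:R) - X ^ (i+1) - 1 = -X ^ (i+1) := by ring
  rw [this]; exact Dvd.dvd.neg_right dvd_rfl

theorem good_pmq : good (fun i => (1:R) + X ^ (i + 1)) := fun i => by
  have : (1:R) + X ^ (i+1) - 1 = X ^ (i+1) := by ring
  rw [this]

theorem pmqInf_split (k : ℕ) : pmqInf = pmq k * Pm (k+1) := by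
  rw [pmqInf, iProd_split good_pmq k, pmq]
  congr 1
  exact iProd_congr fun i => by rw [show k + i + 1 = k + 1 + i by omega]

theorem pqInf_split (k : ℕ) : pqInf = pq k * Pt (k+1) := by
  rw [pqInf, iProd_split good_pq k, pq]
  congr 1
  exact iProd_congr fun i => by rw [show k + i + 1 = k + 1 + i by omega]

theorem base_step (n : ℕ) : (X*(1+X)) * a 1 n = vG n - vG (n+1) := by
  rw [a, vG, vG, show n+2 = n+1+1 by omega, show n+1+2 = n+1+1+1 by omega,
    Q_succ 0 (n+1), Q_succ' 0 n, Pm_succ (n+1+1) (by omega)]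
  ring

theorem base_lim (K : ℕ) : coeff (R := ℚ) K (vG (K+1)) = coeff (R := ℚ) K pqInf := by
  have h1 : vG (K+1) = Q 0 (K+1+1) * ((1+X^(K+1+1)) * Pm (K+1+2)) := by rw [vG]; ring
  have hA : ∀ j, j ≤ K → coeff (R := ℚ) j ((1+X^(K+1+1)) * Pm (K+1+2)) = coeff (R := ℚ) j 1 := by
    intro j hj
    have hd : (X:R)^(K+1) ∣ ((1+X^(K+1+1)) * Pm (K+1+2) - 1) := by
      have : (1+X^(K+1+1)) * Pm (K+1+2) - 1
          = X^(K+1+1) * Pm (K+1+2) + (Pm (K+1+2) - 1) := by ring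
      rw [this]
      exact dvd_add (dvd_mul_of_dvd_left (pow_dvd_pow _ (by omega)) _)
        (dvd_trans (pow_dvd_pow _ (by omega)) (Pm_sub_one_dvd (K+1+2) (by omega)))
    have := coeff_eq_zero_of_dvd hd (show j < K+1 by omega)
    rw [map_sub] at this
    linarith
  rw [h1, coeff_mul_agree _ hA, mul_one]
  have h2 : coeff (R := ℚ) K pqInf = coeff (R := ℚ) K (∏ i ∈ range (K+2), ((1:R) - X^(i+1))) := by
    rw [pqInf]; exact iProd_coeff good_pq (by omega)
  have h3 : Q 0 (K+1+1) = ∏ i ∈ range (K+2), ((1:R) - X^(i+1)) := by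
    rw [Q]
    exact Finset.prod_congr (by norm_num) fun i _ => by rw [show 0+1+i = i+1 by omega]
  rw [h3, h2]

theorem base : pmqInf * (1 - X) = pqInf + (X*(1+X)) * F 1 := by
  rw [F, mul_iSum _ (a_dvd 1 le_rfl)]
  have tele : iSum (fun n => (X*(1+X)) * a 1 n) = vG 0 - pqInf :=
    iSum_tele pqInf base_step base_lim
  rw [tele, pmqInf_split 1]
  have hQ : Q 0 (0+1) = 1 - X := by
    rw [Q, prod_range_one]; norm_num
  have hpmq : pmq 1 = 1 + X := by
    rw [pmq, prod_range_one]; norm_num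
  rw [hpmq, vG, hQ, show (0:ℕ)+2 = 1+1 by omega]
  ring

theorem zsgn_natCast (n : ℕ) : zsgn (n : ℤ) = (-1:R)^n := by
  rcases Nat.even_or_odd n with h | h
  · rw [zsgn, if_pos ((Int.even_coe_nat n).mpr h), h.neg_one_pow]
  · rw [zsgn, if_neg (by rw [Int.even_coe_nat]; exact Nat.not_even_iff_odd.mpr h),
      h.neg_one_pow]

theorem zsgn_neg (j : ℤ) : zsgn (-j) = zsgn j := by
  simp [zsgn, even_neg]

theorem sq_toNat (n : ℕ) : (((n:ℤ))^2).toNat = n^2 := by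
  rw [← Nat.cast_pow, Int.toNat_natCast]

theorem sq_toNat_neg (n : ℕ) : ((-(n:ℤ))^2).toNat = n^2 := by
  rw [neg_sq, sq_toNat]

theorem StepCore (k : ℕ) :
    X^((k+1)^2) * pmq (k+1) * F (k+1) + X^((k+2)^2) * pmq (k+2) * F (k+2)
      = pmqInf * (X^((k+1)^2) - X^((k+2)^2)) := by
  rw [show k+2 = k+1+1 by omega]
  have h := FE (k+1) (by omega)
  have hpmq : pmq (k+1+1) = pmq (k+1) * (1 + X^(k+1+1)) := by
    rw [pmq, prod_range_succ]; rfl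
  rw [hpmq, pmqInf_split (k+1)]
  rw [show (k+1+1)^2 = (k+1)^2 + (k+1+(k+1)+1) by ring, pow_add]
  linear_combination (X^((k+1)^2) * pmq (k+1)) * h

theorem MI (k : ℕ) :
    pmqInf * (∑ j ∈ Finset.Icc (-((k+1:ℕ) : ℤ) + 1) ((k+1:ℕ) : ℤ), zsgn j * X ^ ((j ^ 2).toNat))
      = pqInf + (-1:R)^k * X^((k+1)^2) * pmq (k+1) * F (k+1) := by
  induction k with
  | zero =>
    have hset : Finset.Icc (-((0+1:ℕ) : ℤ) + 1) ((0+1:ℕ) : ℤ) = {0, 1} := by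
      ext j; simp [Finset.mem_Icc]; omega
    rw [hset, Finset.sum_pair (by norm_num : (0:ℤ) ≠ 1)]
    have h0 : zsgn 0 = 1 := by simp [zsgn]
    have h1 : zsgn 1 = -1 := by simp [zsgn]
    rw [h0, h1]
    norm_num
    have hb := base
    have hpmq : pmq 1 = 1 + X := by rw [pmq, prod_range_one]; norm_num
    rw [hpmq]
    linear_combination hb
  | succ k ih =>
    rw [show k+1+1 = k+2 by omega]
    have hset : Finset.Icc (-((k+2:ℕ) : ℤ) + 1) ((k+2:ℕ) : ℤ)
        = insert (-((k+1:ℕ):ℤ)) (insert ((k+2:ℕ):ℤ)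
            (Finset.Icc (-((k+1:ℕ) : ℤ) + 1) ((k+1:ℕ) : ℤ))) := by
      ext j
      simp only [Finset.mem_Icc, Finset.mem_insert]
      push_cast
      omega
    rw [hset, Finset.sum_insert (by simp only [Finset.mem_insert, Finset.mem_Icc]; push_cast; omega),
      Finset.sum_insert (by simp only [Finset.mem_insert, Finset.mem_Icc]; push_cast; omega)]
    rw [zsgn_neg, zsgn_natCast, zsgn_natCast, sq_toNat_neg, sq_toNat]
    have hsc := StepCore k
    linear_combination ih + mul_add (pmqInf) _ _ + ((-1:R)^k) * hsc

theorem Pt_const (m : ℕ) (hm : 1 ≤ m) : constantCoeff (R := ℚ) (Pt m) = 1 := by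
  rw [← coeff_zero_eq_constantCoeff_apply, Pt, iProd_coeff (good_Pt hm) (show 0 < 1 by omega),
    prod_range_one, map_sub, coeff_one, coeff_X_pow, if_pos rfl, if_neg (by omega)]
  norm_num

theorem pq_split (k n : ℕ) : pq (k+(n+1)) = pq k * ((1 - X^(k+1)) * Q (k+1) n) := by
  rw [pq, pq, Finset.prod_range_add]
  congr 1
  rw [prod_range_succ', mul_comm]
  have h1 : (1:R) - X^(k+0+1) = 1 - X^(k+1) := by norm_num
  have h2 : (∏ i ∈ range n, ((1:R) - X^(k+(i+1)+1))) = Q (k+1) n := by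
    rw [Q]
    exact Finset.prod_congr rfl fun i _ => by rw [show k+(i+1)+1 = k+1+1+i by omega]
  rw [h1, h2]

theorem starF (k : ℕ) :
    pqInf * iSum (fun n => Pm (n+(k+1)+1) * (Pt (n+(k+1)+1))⁻¹ * X^((k+1)*n))
      = pq k * F (k+1) := by
  have hg : ∀ n, (X:R)^n ∣ Pm (n+(k+1)+1) * (Pt (n+(k+1)+1))⁻¹ * X^((k+1)*n) :=
    fun n => Dvd.dvd.mul_left (pow_dvd_pow _ (by nlinarith)) _
  rw [mul_iSum pqInf hg, F, mul_iSum (pq k) (a_dvd (k+1) (by omega))]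
  refine iSum_congr fun n => ?_
  have hPt : Pt (n+(k+1)+1) * (Pt (n+(k+1)+1))⁻¹ = 1 :=
    PowerSeries.mul_inv_cancel _ (by rw [Pt_const _ (by omega)]; exact one_ne_zero)
  rw [a, pqInf_split (n+k+1), show n+k+1+1 = n+(k+1)+1 by omega,
    show n+k+1 = k+(n+1) by omega, pq_split k n]
  linear_combination (pq k * ((1 - X^(k+1)) * Q (k+1) n) * Pm (n+(k+1)+1) * X^((k+1)*n)) * hPt

theorem pqInf_const : constantCoeff (R := ℚ) pqInf = 1 := by
  rw [← coeff_zero_eq_constantCoeff_apply, pqInf, iProd_coeff good_pq (show 0 < 1 by omega),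
    prod_range_one]
  simp

theorem pq_const (k : ℕ) : constantCoeff (R := ℚ) (pq k) = 1 := by
  rw [pq, map_prod]
  refine Finset.prod_eq_one fun i _ => ?_
  simp

/-- Alternative truncated form of Gauss' square-number theta series. -/
theorem truncated_square_alt (ℓ : ℕ) (hℓ : 1 ≤ ℓ) :
    pmqInf * pqInf⁻¹ *
        ∑ j ∈ Finset.Icc (-(ℓ : ℤ) + 1) (ℓ : ℤ), zsgn j * X ^ ((j ^ 2).toNat)
    = 1 + (-1 : PowerSeries ℚ) ^ (ℓ - 1) * X ^ (ℓ ^ 2) * pmq ℓ * (pq (ℓ - 1))⁻¹ *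
        iSum (fun n => iProd (fun i => 1 + X ^ (n + ℓ + 1 + i)) *
          (iProd (fun i => 1 - X ^ (n + ℓ + 1 + i)))⁻¹ * X ^ (ℓ * n)) := by
  obtain ⟨k, rfl⟩ : ∃ k, ℓ = k + 1 := ⟨ℓ - 1, by omega⟩
  rw [show k+1-1 = k by omega]
  have hfun : (fun n => iProd (fun i => 1 + X ^ (n + (k+1) + 1 + i)) *
          (iProd (fun i => 1 - X ^ (n + (k+1) + 1 + i)))⁻¹ * X ^ ((k+1) * n))
      = (fun n => Pm (n+(k+1)+1) * (Pt (n+(k+1)+1))⁻¹ * X^((k+1)*n)) := rfl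
  rw [hfun]
  set G := iSum (fun n => Pm (n+(k+1)+1) * (Pt (n+(k+1)+1))⁻¹ * X^((k+1)*n)) with hG
  have hMI := MI k
  have hstar := starF k
  have hP : pqInf⁻¹ * pqInf = 1 :=
    PowerSeries.inv_mul_cancel _ (by rw [pqInf_const]; exact one_ne_zero)
  have hq : (pq k)⁻¹ * pq k = 1 :=
    PowerSeries.inv_mul_cancel _ (by rw [pq_const]; exact one_ne_zero)
  have hGF : G = pqInf⁻¹ * (pq k * F (k+1)) := by
    rw [← hstar, ← mul_assoc, hP, one_mul]
  calc pmqInf * pqInf⁻¹ *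
        ∑ j ∈ Finset.Icc (-((k+1:ℕ) : ℤ) + 1) ((k+1:ℕ) : ℤ), zsgn j * X ^ ((j ^ 2).toNat)
      = pqInf⁻¹ * (pmqInf * ∑ j ∈ Finset.Icc (-((k+1:ℕ) : ℤ) + 1) ((k+1:ℕ) : ℤ),
          zsgn j * X ^ ((j ^ 2).toNat)) := by ring
    _ = pqInf⁻¹ * (pqInf + (-1:R)^k * X^((k+1)^2) * pmq (k+1) * F (k+1)) := by rw [hMI]
    _ = 1 + (-1:R)^k * X^((k+1)^2) * pmq (k+1) * (pqInf⁻¹ * F (k+1)) := by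
        rw [mul_add, hP]; ring
    _ = 1 + (-1:R)^(k+1-1) * X^((k+1)^2) * pmq (k+1) * (pq (k+1-1))⁻¹ * G := by
        rw [show k+1-1 = k by omega, hGF]
        calc 1 + (-1:R)^k * X^((k+1)^2) * pmq (k+1) * (pqInf⁻¹ * F (k+1))
            = 1 + (-1:R)^k * X^((k+1)^2) * pmq (k+1) * ((pq k)⁻¹ * pq k) * (pqInf⁻¹ * F (k+1)) := by
              rw [hq]; ring
          _ = 1 + (-1:R)^k * X^((k+1)^2) * pmq (k+1) * (pq k)⁻¹ * (pqInf⁻¹ * (pq k * F (k+1))) := by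
              ring
    _ = 1 + (-1:R)^(k+1-1) * X ^ ((k+1) ^ 2) * pmq (k+1) * (pq (k+1-1))⁻¹ * G := by
        rw [show k+1-1 = k by omega]
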